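/- arXiv:2107.05369 — 2 statements merged into one kernel-verified Lean document; each statement's English description precedes it below -/
import Mathlib

section
/- Let Q(x̄) = (O, Σ, q) be an OMQ where O is a possibly infinite set of frontier-one TGDs with bodies of treewidth (ℓ,k) (1 ≤ ℓ < k) and q is a CQ of treewidth (ℓ,k). Then for every Σ-database D and every tuple ā over adom(D), ā is a certain answer to Q on D if and only if ā is a certain answer to Q on the (ℓ,k)-unraveling D≈_{ā,ℓ,k} of D up to ā. -/
set_option autoImplicit false

attribute [local instance] Classical.propDecidable

/-! ### Interpretations, databases, homomorphisms -/

structure Interp (C R A : Type) where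
  cn : C → A → Prop
  rn : R → A → A → Prop

namespace Interp

variable {C R A : Type}

/-- The active domain of an interpretation/database. -/
def adom (I : Interp C R A) : Set A :=
  {a | (∃ c, I.cn c a) ∨ (∃ r b, I.rn r a b) ∨ (∃ r b, I.rn r b a)}

/-- An interpretation has finitely many facts (this is what makes it a database). -/
def FiniteFacts (I : Interp C R A) : Prop :=
  {p : C × A | I.cn p.1 p.2}.Finite ∧ {t : R × A × A | I.rn t.1 t.2.1 t.2.2}.Finite

/-- All facts use only symbols from the signature `(SC, SR)`. -/
def InSig (I : Interp C R A) (SC : Set C) (SR : Set R) : Prop :=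
  (∀ c a, I.cn c a → c ∈ SC) ∧ (∀ r a b, I.rn r a b → r ∈ SR)

/-- Restriction of an interpretation to a set of elements. -/
def restrict (I : Interp C R A) (s : Set A) : Interp C R A where
  cn c a := a ∈ s ∧ I.cn c a
  rn r a b := a ∈ s ∧ b ∈ s ∧ I.rn r a b

/-- Semantics of (possibly inverse) roles: `Sum.inl r` is `r`, `Sum.inr r` is `r⁻`. -/
def roleE (I : Interp C R A) : R ⊕ R → A → A → Prop
  | .inl r, a, b => I.rn r a b
  | .inr r, a, b => I.rn r b a

/-- The undirected graph underlying an interpretation. -/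
def graphOf (I : Interp C R A) : SimpleGraph A where
  Adj a b := a ≠ b ∧ ∃ r, I.rn r a b ∨ I.rn r b a
  symm := by constructor; rintro a b ⟨hne, r, hr⟩; exact ⟨hne.symm, r, hr.symm⟩
  loopless := by constructor; rintro a ⟨hne, -⟩; exact hne rfl

/-- A database/interpretation is a tree: the underlying graph is acyclic,
there are no self loops and no multi-edges (trees need not be connected). -/
def IsTree (I : Interp C R A) : Prop :=
  I.graphOf.IsAcyclic ∧ (∀ r a, ¬ I.rn r a a) ∧
    (∀ (ρ₁ ρ₂ : R ⊕ R) (a b : A), ρ₁ ≠ ρ₂ → I.roleE ρ₁ a b → ¬ I.roleE ρ₂ a b)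

end Interp

/-- Homomorphisms between interpretations. -/
structure Hom {C R A B : Type} (I : Interp C R A) (J : Interp C R B) where
  toFun : A → B
  map_cn : ∀ c a, I.cn c a → J.cn c (toFun a)
  map_rn : ∀ r a b, I.rn r a b → J.rn r (toFun a) (toFun b)

/-! ### Tree decompositions and treewidth -/

/-- An `(ℓ,k)`-tree decomposition of an interpretation: an undirected tree `(V,G)`
with bags of size at most `k`, pairwise overlaps of size at most `ℓ`, every active
element appearing in a nonempty connected set of bags, and every role edge
contained in some bag. -/
structure TreeDecomp {C R A : Type} (I : Interp C R A) (ℓ k : ℕ) where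
  V : Type
  G : SimpleGraph V
  conn : G.Connected
  acyc : G.IsAcyclic
  bag : V → Set A
  cover : ∀ a ∈ I.adom, (G.induce {v | a ∈ bag v}).Connected
  edges : ∀ r a b, I.rn r a b → ∃ v, a ∈ bag v ∧ b ∈ bag v
  bagFin : ∀ v, (bag v).Finite
  bagCard : ∀ v, (bag v).ncard ≤ k
  overlap : ∀ v w, v ≠ w → (bag v ∩ bag w).ncard ≤ ℓ

/-- `I` has treewidth `(ℓ,k)`. -/
def HasTW {C R A : Type} (I : Interp C R A) (ℓ k : ℕ) : Prop :=
  Nonempty (TreeDecomp I ℓ k)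

/-! ### Conjunctive queries and UCQs -/

/-- A conjunctive query with `m` answer variables (`Fin m`) and quantified
variables `V`. -/
structure CQ (C R : Type) (m : ℕ) where
  V : Type
  cnAtoms : Set (C × (Fin m ⊕ V))
  rnAtoms : Set (R × (Fin m ⊕ V) × (Fin m ⊕ V))

namespace CQ

variable {C R A : Type} {m : ℕ}

/-- `I ⊨ q(atup)`. -/
def Eval (q : CQ C R m) (I : Interp C R A) (atup : Fin m → A) : Prop :=
  ∃ h : Fin m ⊕ q.V → A, (∀ i, h (.inl i) = atup i) ∧
    (∀ p ∈ q.cnAtoms, I.cn p.1 (h p.2)) ∧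
    (∀ t ∈ q.rnAtoms, I.rn t.1 (h t.2.1) (h t.2.2))

/-- The canonical database of a CQ (all variables as constants). -/
def canon (q : CQ C R m) : Interp C R (Fin m ⊕ q.V) where
  cn c x := (c, x) ∈ q.cnAtoms
  rn r x y := (r, x, y) ∈ q.rnAtoms

/-- The treewidth of a CQ: the treewidth of its canonical database restricted to
the quantified variables (answer variables do not contribute). -/
def HasTWq (q : CQ C R m) (ℓ k : ℕ) : Prop :=
  HasTW (q.canon.restrict (Set.range Sum.inr)) ℓ k

end CQ

/-- A union of conjunctive queries, as an indexed family of CQs of the same arity. -/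
structure UCQ (C R : Type) (m : ℕ) where
  ι : Type
  d : ι → CQ C R m

def UCQ.Eval {C R A : Type} {m : ℕ} (q : UCQ C R m) (I : Interp C R A)
    (atup : Fin m → A) : Prop :=
  ∃ i, (q.d i).Eval I atup

/-! ### Certain answers (generic in the ontology semantics) -/

/-- `atup` is a certain answer on `D` for query semantics `Ev`, w.r.t. all
(nonempty) models satisfying `Mod`: under the standard-names-free reading,
models of `D` are interpretations together with a homomorphism from `D`. -/
def Certain {C R A : Type} {m : ℕ} (Mod : ∀ Δ : Type, Interp C R Δ → Prop)
    (D : Interp C R A) (Ev : ∀ Δ : Type, Interp C R Δ → (Fin m → Δ) → Prop)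
    (atup : Fin m → A) : Prop :=
  ∀ (Δ : Type), Nonempty Δ → ∀ I : Interp C R Δ, Mod Δ I →
    ∀ h : Hom D I, Ev Δ I (fun i => h.toFun (atup i))

/-- `D` is satisfiable w.r.t. the class of models described by `Mod`. -/
def Satisfiable {C R A : Type} (Mod : ∀ Δ : Type, Interp C R Δ → Prop)
    (D : Interp C R A) : Prop :=
  ∃ (Δ : Type) (_ : Nonempty Δ) (I : Interp C R Δ), Nonempty (Hom D I) ∧ Mod Δ I

/-! ### First-order logic (no equality, no constants) -/

inductive FO (C R : Type) : ℕ → Type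
  | cn {n : ℕ} (c : C) (i : Fin n) : FO C R n
  | rn {n : ℕ} (r : R) (i j : Fin n) : FO C R n
  | fls {n : ℕ} : FO C R n
  | imp {n : ℕ} (φ ψ : FO C R n) : FO C R n
  | all {n : ℕ} (φ : FO C R (n+1)) : FO C R n

def FO.Eval {C R A : Type} (I : Interp C R A) : {n : ℕ} → FO C R n → (Fin n → A) → Prop
  | _, .cn c i, v => I.cn c (v i)
  | _, .rn r i j, v => I.rn r (v i) (v j)
  | _, .fls, _ => False
  | _, .imp φ ψ, v => φ.Eval I v → ψ.Eval I v
  | _, .all φ, v => ∀ a, φ.Eval I (Fin.cons a v)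

/-- `I` is a model of the FO ontology `O`. -/
def ModelsFO {C R A : Type} (I : Interp C R A) (O : Set (FO C R 0)) : Prop :=
  ∀ φ ∈ O, φ.Eval I (fun i => i.elim0)

/-- `O ⊨ O'` for FO ontologies. -/
def FOEntails {C R : Type} (O O' : Set (FO C R 0)) : Prop :=
  ∀ (Δ : Type), Nonempty Δ → ∀ I : Interp C R Δ, ModelsFO I O → ModelsFO I O'

/-! ### Tuple-generating dependencies -/

/-- A TGD with `n` frontier variables, whose body and head are CQs with the
frontier variables as answer variables; `head = none` stands for `⊥`. -/
structure TGD (C R : Type) where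
  n : ℕ
  body : CQ C R n
  head : Option (CQ C R n)

def TGD.Sat {C R A : Type} (t : TGD C R) (I : Interp C R A) : Prop :=
  ∀ v : Fin t.n → A, t.body.Eval I v →
    match t.head with
    | some ψ => ψ.Eval I v
    | none => False

def ModelsTGDSet {C R A : Type} (I : Interp C R A) (O : Set (TGD C R)) : Prop :=
  ∀ t ∈ O, t.Sat I

/-! ### Description logic concepts -/

/-- `ELIU` concepts with ⊥, possibly disjunction and the universal role. -/
inductive ELIU (C R : Type) : Type
  | top
  | bot
  | cn (c : C)
  | inter (X Y : ELIU C R)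
  | union (X Y : ELIU C R)
  | exR (ρ : R ⊕ R) (X : ELIU C R)
  | exU (X : ELIU C R)

namespace ELIU

variable {C R A : Type}

def sem (I : Interp C R A) : ELIU C R → A → Prop
  | .top, _ => True
  | .bot, _ => False
  | .cn c, a => I.cn c a
  | .inter X Y, a => X.sem I a ∧ Y.sem I a
  | .union X Y, a => X.sem I a ∨ Y.sem I a
  | .exR ρ X, a => ∃ b, I.roleE ρ a b ∧ X.sem I b
  | .exU X, _ => ∃ b, X.sem I b

def uFree : ELIU C R → Prop
  | .top => True
  | .bot => True
  | .cn _ => True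
  | .inter X Y => X.uFree ∧ Y.uFree
  | .union X Y => X.uFree ∧ Y.uFree
  | .exR _ X => X.uFree
  | .exU _ => False

def disjFree : ELIU C R → Prop
  | .top => True
  | .bot => True
  | .cn _ => True
  | .inter X Y => X.disjFree ∧ Y.disjFree
  | .union _ _ => False
  | .exR _ X => X.disjFree
  | .exU X => X.disjFree

def botFree : ELIU C R → Prop
  | .top => True
  | .bot => False
  | .cn _ => True
  | .inter X Y => X.botFree ∧ Y.botFree
  | .union X Y => X.botFree ∧ Y.botFree
  | .exR _ X => X.botFree
  | .exU X => X.botFree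

end ELIU

/-- A concept inclusion is an `ELI_⊥` CI (no disjunction, no universal role). -/
def ELIbotCI {C R : Type} (p : ELIU C R × ELIU C R) : Prop :=
  p.1.disjFree ∧ p.1.uFree ∧ p.2.disjFree ∧ p.2.uFree

/-- A concept inclusion is an `ELI` CI. -/
def ELICI {C R : Type} (p : ELIU C R × ELIU C R) : Prop :=
  ELIbotCI p ∧ p.1.botFree ∧ p.2.botFree

def ModelsELIUOnt {C R A : Type} (I : Interp C R A)
    (T : Set (ELIU C R × ELIU C R)) : Prop :=
  ∀ p ∈ T, ∀ a, p.1.sem I a → p.2.sem I a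

def EntailsELIU {C R : Type} (T T' : Set (ELIU C R × ELIU C R)) : Prop :=
  ∀ (Δ : Type), Nonempty Δ → ∀ I : Interp C R Δ, ModelsELIUOnt I T → ModelsELIUOnt I T'

/-- `ALCI` concepts. -/
inductive ALCI (C R : Type) : Type
  | top
  | cn (c : C)
  | neg (X : ALCI C R)
  | inter (X Y : ALCI C R)
  | exR (ρ : R ⊕ R) (X : ALCI C R)

namespace ALCI

variable {C R A : Type}

def sem (I : Interp C R A) : ALCI C R → A → Prop
  | .top, _ => True
  | .cn c, a => I.cn c a
  | .neg X, a => ¬ X.sem I a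
  | .inter X Y, a => X.sem I a ∧ Y.sem I a
  | .exR ρ X, a => ∃ b, I.roleE ρ a b ∧ X.sem I b

/-- `C ⊔ D` as an abbreviation. -/
def unionA (X Y : ALCI C R) : ALCI C R := .neg (.inter (.neg X) (.neg Y))

/-- `∀r.C` as an abbreviation. -/
def allR (r : R) (X : ALCI C R) : ALCI C R := .neg (.exR (.inl r) (.neg X))

/-- `∃rⁿ.C` (n-fold nesting). -/
def exPow (r : R) : ℕ → ALCI C R → ALCI C R
  | 0, X => X
  | n+1, X => .exR (.inl r) (exPow r n X)

end ALCI

def ModelsALCIOnt {C R A : Type} (I : Interp C R A)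
    (O : Set (ALCI C R × ALCI C R)) : Prop :=
  ∀ p ∈ O, ∀ a, p.1.sem I a → p.2.sem I a

def EntailsALCI {C R : Type} (O O' : Set (ALCI C R × ALCI C R)) : Prop :=
  ∀ (Δ : Type), Nonempty Δ → ∀ I : Interp C R Δ, ModelsALCIOnt I O → ModelsALCIOnt I O'

/-- The set `O≈` of all `ELI^u_⊥` concept inclusions entailed by the ALCI
ontology `O`. -/
def ELIuApprox {C R : Type} (O : Set (ALCI C R × ALCI C R)) :
    Set (ELIU C R × ELIU C R) :=
  {p | p.1.disjFree ∧ p.2.disjFree ∧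
    ∀ (Δ : Type), Nonempty Δ → ∀ I : Interp C R Δ, ModelsALCIOnt I O →
      ∀ a, p.1.sem I a → p.2.sem I a}

/-! ### bELIQs -/

/-- A bELIQ: either an ELIQ `C(x)` (unary) or a Boolean ELIQ `∃u.C`. -/
inductive BELIQ (C R : Type) : Type
  | q1 (X : ELIU C R)
  | q0 (X : ELIU C R)

namespace BELIQ

variable {C R A : Type}

def arity : BELIQ C R → ℕ
  | .q1 _ => 1
  | .q0 _ => 0

/-- Well-formedness: the underlying concept is an `ELI` concept. -/
def wf : BELIQ C R → Prop
  | .q1 X => X.disjFree ∧ X.uFree ∧ X.botFree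
  | .q0 X => X.disjFree ∧ X.uFree ∧ X.botFree

def Eval : (q : BELIQ C R) → Interp C R A → (Fin q.arity → A) → Prop
  | .q1 X, I, v => X.sem I (v ⟨0, Nat.zero_lt_one⟩)
  | .q0 X, I, _ => ∃ a, X.sem I a

end BELIQ

/-! ### Tree unraveling -/

/-- Paths in a database, indexed by their tail. -/
inductive UPath {C R A : Type} (I : Interp C R A) : A → Type
  | nil (a : A) : UPath I a
  | cons {a : A} (p : UPath I a) (ρ : R ⊕ R) (b : A) (h : I.roleE ρ a b) : UPath I b

/-- The tree unraveling `D≈_S` of `D` at `S`: it contains all facts of `D|_S`,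
the facts along paths, and the connecting facts between `S` and paths. -/
def treeUnravel {C R A : Type} (D : Interp C R A) (S : Set A) :
    Interp C R (A ⊕ (Σ a : A, UPath D a)) where
  cn c x :=
    match x with
    | .inl a => a ∈ S ∧ D.cn c a
    | .inr p => D.cn c p.1
  rn r x y :=
    (∃ a b, a ∈ S ∧ b ∈ S ∧ D.rn r a b ∧ x = .inl a ∧ y = .inl b) ∨
    (∃ (a : A) (p : UPath D a) (b : A) (h : D.roleE (.inl r) a b),
        x = .inr ⟨a, p⟩ ∧ y = .inr ⟨b, p.cons (.inl r) b h⟩) ∨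
    (∃ (a : A) (p : UPath D a) (b : A) (h : D.roleE (.inr r) a b),
        y = .inr ⟨a, p⟩ ∧ x = .inr ⟨b, p.cons (.inr r) b h⟩) ∨
    (∃ (a b : A) (p : UPath D b), a ∈ S ∧ D.rn r a b ∧ x = .inl a ∧ y = .inr ⟨b, p⟩) ∨
    (∃ (a b : A) (p : UPath D b), a ∈ S ∧ D.rn r b a ∧ x = .inr ⟨b, p⟩ ∧ y = .inl a)

/-! ### (ℓ,k)-unraveling -/

/-- Admissibility of a bag `T` in an `(ℓ,k)`-sequence: `S ⊆ T ⊆ adom(D)` and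
`|T \ S| ≤ k`. -/
def SeqOk {C R A : Type} (D : Interp C R A) (S : Set A) (k : ℕ) (T : Set A) : Prop :=
  S ⊆ T ∧ T ⊆ D.adom ∧ (T \ S).Finite ∧ (T \ S).ncard ≤ k

/-- `(ℓ,k)`-sequences `S₀,O₀,S₁,…,Sₙ`, indexed by the last bag `Sₙ`. -/
inductive LKSeq {C R A : Type} (D : Interp C R A) (S : Set A) (ℓ k : ℕ) : Set A → Type
  | first (S₀ : Set A) (h : SeqOk D S k S₀) : LKSeq D S ℓ k S₀
  | step {T : Set A} (v : LKSeq D S ℓ k T) (O T' : Set A)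
      (hO : S ⊆ O) (hOT : O ⊆ T ∩ T') (hOf : (O \ S).Finite)
      (hOl : (O \ S).ncard ≤ ℓ) (hT' : SeqOk D S k T') : LKSeq D S ℓ k T'

/-- Elements of the `(ℓ,k)`-unraveling: elements of `S` keep their names
(`Sum.inl`), all other copies are identified by the sequence at which they are
introduced. -/
abbrev LKElem {C R A : Type} (D : Interp C R A) (S : Set A) (ℓ k : ℕ) : Type :=
  A ⊕ (Σ T : Set A, LKSeq D S ℓ k T × A)

/-- The copy `a_v` of `a` in the bag of the sequence `v`. -/
noncomputable def LKSeq.rep {C R A : Type} {D : Interp C R A} {S : Set A} {ℓ k : ℕ} :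
    {T : Set A} → LKSeq D S ℓ k T → A → LKElem D S ℓ k
  | _, .first S₀ h, a =>
      if a ∈ S then Sum.inl a else Sum.inr ⟨S₀, (LKSeq.first S₀ h, a)⟩
  | _, .step v O T' h1 h2 h3 h4 h5, a =>
      if a ∈ S then Sum.inl a
      else if a ∈ O then v.rep a
      else Sum.inr ⟨T', (LKSeq.step v O T' h1 h2 h3 h4 h5, a)⟩

/-- The `(ℓ,k)`-unraveling `D≈_{S,ℓ,k}` of `D` up to `S`. -/
noncomputable def unravelLK {C R A : Type} (D : Interp C R A) (S : Set A) (ℓ k : ℕ) :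
    Interp C R (LKElem D S ℓ k) where
  cn c x := ∃ (T : Set A) (v : LKSeq D S ℓ k T) (a : A),
      a ∈ T ∧ x = v.rep a ∧ D.cn c a
  rn r x y := ∃ (T : Set A) (v : LKSeq D S ℓ k T) (a b : A),
      a ∈ T ∧ b ∈ T ∧ x = v.rep a ∧ y = v.rep b ∧ D.rn r a b

/-- The uncopying map. -/
def uncopyLK {C R A : Type} {D : Interp C R A} {S : Set A} {ℓ k : ℕ} :
    LKElem D S ℓ k → A
  | .inl a => a
  | .inr x => x.2.2

/-- `x` is a copy of `a` in the `(ℓ,k)`-unraveling. -/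
def IsCopyLK {C R A : Type} {D : Interp C R A} {S : Set A} {ℓ k : ℕ}
    (x : LKElem D S ℓ k) (a : A) : Prop :=
  ∃ (T : Set A) (v : LKSeq D S ℓ k T), a ∈ T ∧ x = v.rep a

/-- The frontier-one `ℓ,k,ℓ',k'`-TGDs entailed by the ALCI ontology `O`. -/
def approxTGDs {C R : Type} (O : Set (ALCI C R × ALCI C R)) (ℓ k ℓ' k' : ℕ) :
    Set (TGD C R) :=
  {t | t.n ≤ 1 ∧ HasTW t.body.canon ℓ k ∧
       (∀ ψ, t.head = some ψ → HasTW ψ.canon ℓ' k') ∧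
       ∀ (Δ : Type), Nonempty Δ → ∀ I : Interp C R Δ, ModelsALCIOnt I O → t.Sat I}

/-! ### The disjunct operation f and the approximation set E_O -/

def fDisj {C R : Type} : ELIU C R → Set (ELIU C R)
  | .top => {ELIU.top}
  | .bot => {ELIU.bot}
  | .cn c => {ELIU.cn c}
  | .inter X Y => {Z | ∃ X' ∈ fDisj X, ∃ Y' ∈ fDisj Y, Z = ELIU.inter X' Y'}
  | .union X Y => fDisj X ∪ fDisj Y
  | .exR ρ X => {Z | ∃ X' ∈ fDisj X, Z = ELIU.exR ρ X'}
  | .exU X => {Z | ∃ X' ∈ fDisj X, Z = ELIU.exU X'}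

/-- The rewriting of `O` replacing each `C ⊑ D` by `{C' ⊑ D : C' ∈ f(C)}`. -/
def rewriteO {C R : Type} (O : Set (ELIU C R × ELIU C R)) :
    Set (ELIU C R × ELIU C R) :=
  {p | ∃ q ∈ O, p.2 = q.2 ∧ p.1 ∈ fDisj q.1}

/-- `E_O`: all ontologies obtained by choosing, for each inclusion `C' ⊑ D` of
the rewriting, one inclusion `C' ⊑ D'` with `D' ∈ f(D)`. -/
def EO {C R : Type} (O : Set (ELIU C R × ELIU C R)) :
    Set (Set (ELIU C R × ELIU C R)) :=
  {Oh | ∃ g : ELIU C R × ELIU C R → ELIU C R,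
      (∀ p ∈ rewriteO O, g p ∈ fDisj p.2) ∧
      Oh = {q | ∃ p ∈ rewriteO O, q = (p.1, g p)}}

/-! ### Direct products -/

def prodInterp {C R : Type} {n : ℕ} {A : Fin n → Type}
    (I : ∀ i, Interp C R (A i)) : Interp C R (∀ i, A i) where
  cn c f := ∀ i, (I i).cn c (f i)
  rn r f g := ∀ i, (I i).rn r (f i) (g i)

/-! ### Concrete databases and queries for specific statements -/

/-- The grid CQ `q_m` of Statement 16, as its canonical database. -/
def gridDB {C R : Type} (m : ℕ) (r : R) (Aname : Fin m × Fin m → C) :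
    Interp C R (Fin m × Fin m) where
  cn c p := c = Aname p
  rn ρ p q := ρ = r ∧ Even (p.1.1 + p.2.1) ∧
    ((p.1.1 : ℤ) - (q.1.1 : ℤ)).natAbs + ((p.2.1 : ℤ) - (q.2.1 : ℤ)).natAbs = 1

/-- The 3-cycle database of Statement 19. -/
def cycleDB {C R : Type} (nA : Fin 3 → C) (r : R) : Interp C R (Fin 3) where
  cn c i := c = nA i
  rn ρ i j := ρ = r ∧ j = i + 1

/-- The ontology `{Aᵢ ⊓ Aⱼ ⊑ B : 1 ≤ i < j ≤ 3}` of Statement 19. -/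
def cycleOnt {C R : Type} (nA : Fin 3 → C) (nB : C) : Set (ELIU C R × ELIU C R) :=
  {p | ∃ i j : Fin 3, i < j ∧
    p = (ELIU.inter (ELIU.cn (nA i)) (ELIU.cn (nA j)), ELIU.cn nB)}

/-- The Boolean CQ `∃x B(x)` of Statement 19. -/
def existsB {C R : Type} (nB : C) : CQ C R 0 where
  V := Unit
  cnAtoms := {(nB, Sum.inr ())}
  rnAtoms := ∅

/-- The ontology `O = {∃r.⊤ ⊓ ∀r.A ⊑ B₁ ⊔ B₂}` of Statement 14. -/
def O14 {C R : Type} (a b1 b2 : C) (r : R) : Set (ALCI C R × ALCI C R) :=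
  {(ALCI.inter (ALCI.exR (.inl r) ALCI.top) (ALCI.allR r (ALCI.cn a)),
    ALCI.unionA (ALCI.cn b1) (ALCI.cn b2))}

/-- The ontology `O_n` of Statement 14. -/
def O14n {C R : Type} (a b1 x : C) (r : R) (n : ℕ) : Set (ALCI C R × ALCI C R) :=
  {(ALCI.exR (.inl r) (ALCI.cn a), ALCI.exPow r n (ALCI.cn x)),
   (ALCI.exR (.inl r) (ALCI.inter (ALCI.cn a) (ALCI.exPow r (n-1) (ALCI.cn x))),
    ALCI.cn b1)}

/-!
The direction from the unraveling to `D` composes with the uncopying homomorphism `D≈ → D`.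

For the converse, let `I ⊨ O` come with a homomorphism `g` from the unraveling. In place of the
chase we use a guided model `J` built from `I`: an element of `J` is an active element `a` of
`D` together with an element of `I` for every copy of `a` in the unraveling (or just an element
of `I`, with no anchor), and a fact holds in `J` if it holds in `I` at every `(ℓ,k)`-sequence
whose last bag contains the anchors. Through `g`, `D` maps into `J`.

A homomorphism from a structure of treewidth `(ℓ,k)` into `J` lifts to `I`: going down a tree
decomposition, each node gets a sequence whose last bag consists of the anchors of its bag,
consecutive sequences overlapping in the anchors of the shared variables, so that every variable
is read off at one and the same copy of its anchor. For a TGD body, whose frontier is a single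
variable, the lift can be started at any prescribed copy of the frontier's anchor; collecting
the resulting head matches over all copies shows `J ⊨ O`. For `q` the lift transfers the match
of `q` in `J` guaranteed by certainty on `D` to a match in `I`.
-/

lemma Set.ncard_union_sdiff_le {A : Type} {S O : Set A} (hO : O.Finite) :
    ((S ∪ O) \ S).ncard ≤ O.ncard := by
  rw [Set.union_sdiff_left]
  exact Set.ncard_le_ncard Set.sdiff_subset hO

namespace LKSeq

variable {C R A : Type} {D : Interp C R A} {S : Set A} {ℓ k : ℕ}

lemma base_subset {T : Set A} : LKSeq D S ℓ k T → S ⊆ T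
  | .first _ h => h.1
  | .step _ _ _ _ _ _ _ h => h.1

lemma rep_of_mem_base {T : Set A} (v : LKSeq D S ℓ k T) {a : A} (ha : a ∈ S) :
    v.rep a = .inl a := by
  cases v <;> simp [rep, ha]

lemma uncopyLK_rep {T : Set A} (v : LKSeq D S ℓ k T) (a : A) : uncopyLK (v.rep a) = a := by
  induction v with
  | first => by_cases ha : a ∈ S <;> simp [rep, ha, uncopyLK]
  | step v O _ _ _ _ _ _ ih =>
    by_cases ha : a ∈ S
    · simp [rep, ha, uncopyLK]
    · by_cases hO : a ∈ O
      · simpa [rep, ha, hO] using ih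
      · simp [rep, ha, hO, uncopyLK]

def stepUnion {T : Set A} (v : LKSeq D S ℓ k T) {O B : Set A} (hO : O ⊆ T ∩ B)
    (hOf : O.Finite) (hOℓ : O.ncard ≤ ℓ) (hB : SeqOk D S k (S ∪ B)) :
    LKSeq D S ℓ k (S ∪ B) :=
  v.step (S ∪ O) (S ∪ B) Set.subset_union_left
    (Set.union_subset (Set.subset_inter v.base_subset Set.subset_union_left)
      fun _ ha => ⟨(hO ha).1, .inr (hO ha).2⟩)
    (by rw [Set.union_sdiff_left]; exact hOf.sdiff) ((Set.ncard_union_sdiff_le hOf).trans hOℓ) hB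

lemma rep_stepUnion_of_mem {T : Set A} (v : LKSeq D S ℓ k T) {O B : Set A} (hO : O ⊆ T ∩ B)
    (hOf : O.Finite) (hOℓ : O.ncard ≤ ℓ) (hB : SeqOk D S k (S ∪ B)) {a : A} (ha : a ∈ O) :
    (v.stepUnion hO hOf hOℓ hB).rep a = v.rep a := by
  by_cases haS : a ∈ S
  · rw [rep_of_mem_base _ haS, rep_of_mem_base _ haS]
  · simp [stepUnion, rep, haS, ha]

end LKSeq

lemma seqOk_union {C R A : Type} {D : Interp C R A} {S B : Set A} {k : ℕ} (hS : S ⊆ D.adom)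
    (hB : B ⊆ D.adom) (hBf : B.Finite) (hBk : B.ncard ≤ k) : SeqOk D S k (S ∪ B) :=
  ⟨Set.subset_union_left, Set.union_subset hS hB,
    by rw [Set.union_sdiff_left]; exact hBf.sdiff, (Set.ncard_union_sdiff_le hBf).trans hBk⟩

def uncopyHom {C R A : Type} (D : Interp C R A) (S : Set A) (ℓ k : ℕ) :
    Hom (unravelLK D S ℓ k) D where
  toFun := uncopyLK
  map_cn := by
    rintro c _ ⟨T, v, a, -, rfl, hc⟩
    rwa [v.uncopyLK_rep]
  map_rn := by
    rintro r _ _ ⟨T, v, a, b, -, -, rfl, rfl, hr⟩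
    rwa [v.uncopyLK_rep, v.uncopyLK_rep]

namespace Hom

variable {C R A B E : Type} {I : Interp C R A} {J : Interp C R B} {K : Interp C R E}

def comp (g : Hom J K) (f : Hom I J) : Hom I K where
  toFun := g.toFun ∘ f.toFun
  map_cn c a h := g.map_cn c _ (f.map_cn c a h)
  map_rn r a b h := g.map_rn r _ _ (f.map_rn r a b h)

def ofEqOn (f : Hom I J) (g : A → B) (h : Set.EqOn g f.toFun I.adom) : Hom I J where
  toFun := g
  map_cn c a ha := h (Or.inl ⟨c, ha⟩) ▸ f.map_cn c a ha
  map_rn r a b hab := by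
    rw [h (Or.inr (Or.inl ⟨r, b, hab⟩)), h (Or.inr (Or.inr ⟨r, a, hab⟩))]
    exact f.map_rn r a b hab

end Hom

lemma Interp.restrict_univ {C R A : Type} (I : Interp C R A) : I.restrict Set.univ = I := by
  cases I
  simp [Interp.restrict]

lemma CQ.eval_iff_exists_hom {C R A : Type} {m : ℕ} (q : CQ C R m) (I : Interp C R A)
    (v : Fin m → A) : q.Eval I v ↔ ∃ h : Hom q.canon I, ∀ i, h.toFun (.inl i) = v i :=
  ⟨fun ⟨h, hv, hc, hr⟩ => ⟨⟨h, fun c x hx => hc (c, x) hx, fun r x y hxy => hr (r, x, y) hxy⟩, hv⟩,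
    fun ⟨h, hv⟩ => ⟨h.toFun, hv, fun p hp => h.map_cn p.1 p.2 hp,
      fun t ht => h.map_rn t.1 t.2.1 t.2.2 ht⟩⟩

lemma certain_of_hom {C R A B : Type} {m : ℕ} {Mod : ∀ Δ : Type, Interp C R Δ → Prop}
    {Ev : ∀ Δ : Type, Interp C R Δ → (Fin m → Δ) → Prop} {D : Interp C R A}
    {D' : Interp C R B} {t : Fin m → A} {t' : Fin m → B} (φ : Hom D' D)
    (hφ : ∀ i, φ.toFun (t' i) = t i) (h : Certain Mod D' Ev t') : Certain Mod D Ev t := by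
  intro Δ hΔ I hI g
  simpa [Hom.comp, hφ] using h Δ hΔ I hI (g.comp φ)

namespace TreeDecomp

variable {C R A : Type} {I : Interp C R A} {ℓ k : ℕ}

noncomputable def node (td : TreeDecomp I ℓ k) {a : A} (ha : a ∈ I.adom) : td.V :=
  (td.cover a ha).nonempty.some

lemma mem_bag_node (td : TreeDecomp I ℓ k) {a : A} (ha : a ∈ I.adom) : a ∈ td.bag (td.node ha) :=
  (td.cover a ha).nonempty.some.2

lemma exists_bag_of_subsingleton (td : TreeDecomp I ℓ k) {Z : Set A} (hZ : Z.Subsingleton) :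
    ∃ v, ∀ a ∈ Z, a ∈ I.adom → a ∈ td.bag v := by
  by_cases h : ∃ a ∈ Z, a ∈ I.adom
  · obtain ⟨a, haZ, ha⟩ := h
    exact ⟨td.node ha, fun b hbZ _ => hZ haZ hbZ ▸ td.mem_bag_node ha⟩
  · obtain ⟨v⟩ := td.conn.nonempty
    exact ⟨v, fun a haZ ha => absurd ⟨a, haZ, ha⟩ h⟩

end TreeDecomp

lemma exists_eq_const_of_le_one {X : Type} [Nonempty X] {n : ℕ} (hn : n ≤ 1) (v : Fin n → X) :
    ∃ x, v = fun _ => x := by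
  have := Fin.subsingleton_iff_le_one.2 hn
  rcases isEmpty_or_nonempty (Fin n) with _ | ⟨⟨i⟩⟩
  · exact ⟨Classical.arbitrary X, funext isEmptyElim⟩
  · exact ⟨v i, funext fun j => congrArg v (Subsingleton.elim j i)⟩

namespace SimpleGraph

variable {V : Type} {G : SimpleGraph V}

noncomputable def Connected.rootPath (hG : G.Connected) (r₀ v : V) : G.Walk r₀ v :=
  (hG.preconnected r₀ v).some.bypass

lemma Connected.isPath_rootPath (hG : G.Connected) (r₀ v : V) : (hG.rootPath r₀ v).IsPath :=
  Walk.bypass_isPath _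

lemma Connected.rootPath_self (hG : G.Connected) (r₀ : V) : hG.rootPath r₀ r₀ = .nil :=
  (Walk.isPath_iff_nil.1 (hG.isPath_rootPath r₀ r₀)).eq_nil

lemma IsAcyclic.reverse_rootPath_eq_cons_or (hac : G.IsAcyclic) (hG : G.Connected) {r₀ u v : V}
    (h : G.Adj u v) :
    (hG.rootPath r₀ v).reverse = .cons h.symm (hG.rootPath r₀ u).reverse ∨
      (hG.rootPath r₀ u).reverse = .cons h (hG.rootPath r₀ v).reverse := by
  have hu := hG.isPath_rootPath r₀ u
  have hv := hG.isPath_rootPath r₀ v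
  by_cases hmem : u ∈ (hG.rootPath r₀ v).support
  · left
    rw [hac.path_concat hu hv h hmem, Walk.reverse_concat]
  · right
    have := hac.mem_support_of_ne_mem_support_of_adj_of_isPath hu hv h hmem
    rw [hac.path_concat hv hu h.symm this, Walk.reverse_concat]

end SimpleGraph

namespace Guided

section Model

variable {C R A W : Type} (D : Interp C R A) (S : Set A) (ℓ k : ℕ) (Δ)

abbrev Elem : Type := ({a : A // a ∈ D.adom} × (LKElem D S ℓ k → Δ)) ⊕ Δ

variable {D S ℓ k Δ}

def Elem.anchor : Elem D S ℓ k Δ → Set A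
  | .inl x => {x.1.1}
  | .inr _ => ∅

noncomputable def Elem.val {T : Set A} (p : LKSeq D S ℓ k T) : Elem D S ℓ k Δ → Δ
  | .inl x => x.2 (p.rep x.1.1)
  | .inr δ => δ

variable (D S ℓ k) in
def model (I : Interp C R Δ) : Interp C R (Elem D S ℓ k Δ) where
  cn c e := ∀ (T : Set A) (p : LKSeq D S ℓ k T), e.anchor ⊆ T → I.cn c (e.val p)
  rn r e e' := ∀ (T : Set A) (p : LKSeq D S ℓ k T), e.anchor ⊆ T → e'.anchor ⊆ T →
    I.rn r (e.val p) (e'.val p)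

variable {I : Interp C R Δ}

lemma Elem.anchor_subset_adom (e : Elem D S ℓ k Δ) : e.anchor ⊆ D.adom := by
  rcases e with ⟨a, _⟩ | _
  · simp [anchor, a.2]
  · simp [anchor]

lemma Elem.val_congr (e : Elem D S ℓ k Δ) {T T' : Set A} {p : LKSeq D S ℓ k T}
    {p' : LKSeq D S ℓ k T'} (h : ∀ a ∈ e.anchor, p.rep a = p'.rep a) : e.val p = e.val p' := by
  rcases e with ⟨a, φ⟩ | _
  · simp [val, h a.1 rfl]
  · rfl

lemma Elem.val_eq_of_anchor_subset (e : Elem D S ℓ k Δ) (he : e.anchor ⊆ S) {T T' : Set A}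
    (p : LKSeq D S ℓ k T) (p' : LKSeq D S ℓ k T') : e.val p = e.val p' :=
  e.val_congr fun a ha => by rw [p.rep_of_mem_base (he ha), p'.rep_of_mem_base (he ha)]

noncomputable def Elem.anchorSeq (hS : S ⊆ D.adom) (hk : 1 ≤ k) (e : Elem D S ℓ k Δ) :
    LKSeq D S ℓ k (S ∪ e.anchor) :=
  .first _ <| seqOk_union hS e.anchor_subset_adom (by rcases e with _ | _ <;> simp [anchor])
    (by rcases e with _ | _ <;> simp [anchor, hk])

/-- A map into the guided model is a homomorphism as soon as its values at every
admissible sequence form one. -/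
def homOfVal {M : Interp C R W} (τ : W → Elem D S ℓ k Δ) (P : ∀ T, LKSeq D S ℓ k T → Prop)
    (hP : ∀ z T (p : LKSeq D S ℓ k T), (τ z).anchor ⊆ T → P T p)
    (H : ∀ T (p : LKSeq D S ℓ k T), P T p → Hom M I)
    (hH : ∀ T p (hp : P T p) z, (τ z).val p = (H T p hp).toFun z) :
    Hom M (model D S ℓ k I) where
  toFun := τ
  map_cn c z h T p hz := by
    rw [hH T p (hP z T p hz)]
    exact (H T p _).map_cn c z h
  map_rn r z z' h T p hz _ := by
    rw [hH T p (hP z T p hz), hH T p (hP z T p hz)]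
    exact (H T p _).map_rn r z z' h

noncomputable def homOfUnravel [Nonempty Δ] (g : Hom (unravelLK D S ℓ k) I) :
    Hom D (model D S ℓ k I) where
  toFun a := if h : a ∈ D.adom then .inl (⟨a, h⟩, g.toFun) else .inr (Classical.arbitrary Δ)
  map_cn c a hc := by
    rw [dif_pos (show a ∈ D.adom from Or.inl ⟨c, hc⟩)]
    intro T p ha
    exact g.map_cn c _ ⟨T, p, a, ha rfl, rfl, hc⟩
  map_rn r a b hab := by
    rw [dif_pos (show a ∈ D.adom from Or.inr (Or.inl ⟨r, b, hab⟩)),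
      dif_pos (show b ∈ D.adom from Or.inr (Or.inr ⟨r, a, hab⟩))]
    intro T p ha hb
    exact g.map_rn r _ _ ⟨T, p, a, b, ha rfl, hb rfl, rfl, rfl, hab⟩

def anchors (f : W → Elem D S ℓ k Δ) (s : Set W) : Set A := ⋃ z ∈ s, (f z).anchor

variable {f : W → Elem D S ℓ k Δ}

lemma anchor_subset_anchors {s : Set W} {z : W} (hz : z ∈ s) : (f z).anchor ⊆ anchors f s :=
  Set.subset_biUnion_of_mem (u := fun z => (f z).anchor) hz

lemma anchors_mono {s s' : Set W} (h : s ⊆ s') : anchors f s ⊆ anchors f s' :=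
  Set.biUnion_subset_biUnion_left h

lemma anchors_subset_adom (s : Set W) : anchors f s ⊆ D.adom :=
  Set.iUnion₂_subset fun z _ => (f z).anchor_subset_adom

lemma anchors_subset_image (s : Set W) :
    anchors f s ⊆ (fun x => x.1.1) '' (Sum.inl ⁻¹' (f '' s)) := by
  refine Set.iUnion₂_subset fun z hz => ?_
  rcases hfz : f z with x | _
  · simpa [Elem.anchor] using ⟨x.2, z, hz, hfz⟩
  · simp [Elem.anchor]

lemma anchors_finite {s : Set W} (hs : s.Finite) : (anchors f s).Finite :=
  (((hs.image f).preimage Sum.inl_injective.injOn).image _).subset (anchors_subset_image s)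

lemma ncard_anchors_le {s : Set W} (hs : s.Finite) : (anchors f s).ncard ≤ s.ncard :=
  calc (anchors f s).ncard
      ≤ ((fun x => x.1.1) '' (Sum.inl ⁻¹' (f '' s))).ncard :=
        Set.ncard_le_ncard (anchors_subset_image s)
          (((hs.image f).preimage Sum.inl_injective.injOn).image _)
    _ ≤ (Sum.inl ⁻¹' (f '' s)).ncard :=
        Set.ncard_image_le ((hs.image f).preimage Sum.inl_injective.injOn)
    _ ≤ (f '' s).ncard :=
        Set.ncard_le_ncard_of_injOn Sum.inl (fun _ h => h) Sum.inl_injective.injOn (hs.image f)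
    _ ≤ s.ncard := Set.ncard_image_le hs

lemma seqOk_anchors (hS : S ⊆ D.adom) {s : Set W} (hs : s.Finite) (hsk : s.ncard ≤ k) :
    SeqOk D S k (S ∪ anchors f s) :=
  seqOk_union hS (anchors_subset_adom s) (anchors_finite hs) ((ncard_anchors_le hs).trans hsk)

end Model

open SimpleGraph

variable {C R A Δ W : Type} {D : Interp C R A} {S : Set A} {ℓ k : ℕ}
  {M : Interp C R W} {Q : Set W}

section AlongTree

variable (hS : S ⊆ D.adom) (f : W → Elem D S ℓ k Δ) (td : TreeDecomp (M.restrict Q) ℓ k)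
  {r₀ : td.V} (seed : LKSeq D S ℓ k (S ∪ anchors f (td.bag r₀)))

/-- Along a walk from `v` back to the root, the sequence started at `seed` whose bags are `S`
plus the anchors of the bags of the nodes passed, consecutive bags overlapping in the anchors of
the variables shared by the two nodes. -/
noncomputable def alongWalk : {v : td.V} → td.G.Walk v r₀ →
    LKSeq D S ℓ k (S ∪ anchors f (td.bag v))
  | _, .nil => seed
  | v, @Walk.cons _ _ _ u _ h w =>
    (alongWalk w).stepUnion (O := anchors f (td.bag u ∩ td.bag v))
      (Set.subset_inter ((anchors_mono Set.inter_subset_left).trans Set.subset_union_right)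
        (anchors_mono Set.inter_subset_right))
      (anchors_finite ((td.bagFin u).inter_of_left _))
      ((ncard_anchors_le ((td.bagFin u).inter_of_left _)).trans (td.overlap u v h.ne.symm))
      (seqOk_anchors hS (td.bagFin v) (td.bagCard v))

noncomputable def seqAt (v : td.V) : LKSeq D S ℓ k (S ∪ anchors f (td.bag v)) :=
  alongWalk hS f td seed (td.conn.rootPath r₀ v).reverse

lemma seqAt_root : seqAt hS f td seed r₀ = seed := by
  simp [seqAt, Connected.rootPath_self, alongWalk]

lemma rep_seqAt_eq_of_adj {u v : td.V} (h : td.G.Adj u v) {z : W} (hzu : z ∈ td.bag u)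
    (hzv : z ∈ td.bag v) {a : A} (ha : a ∈ (f z).anchor) :
    (seqAt hS f td seed u).rep a = (seqAt hS f td seed v).rep a := by
  rcases td.acyc.reverse_rootPath_eq_cons_or td.conn h with huv | hvu
  · rw [seqAt, seqAt, huv, alongWalk, LKSeq.rep_stepUnion_of_mem]
    exact anchor_subset_anchors (Set.mem_inter hzu hzv) ha
  · rw [seqAt, seqAt, hvu, alongWalk, LKSeq.rep_stepUnion_of_mem]
    exact anchor_subset_anchors (Set.mem_inter hzv hzu) ha

/-- The copy of an anchor of `z` is the same at all nodes whose bag contains `z`, since these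
nodes form a connected subtree. -/
lemma val_seqAt_eq {z : W} (hz : z ∈ (M.restrict Q).adom) {u v : td.V} (hzu : z ∈ td.bag u)
    (hzv : z ∈ td.bag v) : (f z).val (seqAt hS f td seed u) = (f z).val (seqAt hS f td seed v) := by
  refine (f z).val_congr fun a ha => ?_
  suffices H : ∀ x y : {w : td.V | z ∈ td.bag w}, (td.G.induce {w | z ∈ td.bag w}).Walk x y →
      (seqAt hS f td seed x).rep a = (seqAt hS f td seed y).rep a from
    ((td.cover z hz).preconnected ⟨u, hzu⟩ ⟨v, hzv⟩).elim (H _ _)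
  intro x y w
  induction w with
  | nil => rfl
  | @cons x y _ h _ ih =>
    exact (rep_seqAt_eq_of_adj hS f td seed (by simpa using h) x.2 y.2 ha).trans ih

end AlongTree

section LiftHom

variable {I : Interp C R Δ} (hS : S ⊆ D.adom) (hk : 1 ≤ k) (F : Hom M (model D S ℓ k I))
  (td : TreeDecomp (M.restrict Q) ℓ k) {r₀ : td.V}
  (seed : LKSeq D S ℓ k (S ∪ anchors F.toFun (td.bag r₀)))

noncomputable def homeSeq (z : W) : Σ T : Set A, LKSeq D S ℓ k T :=
  if hz : z ∈ (M.restrict Q).adom then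
    ⟨_, seqAt hS F.toFun td seed (td.node hz)⟩
  else ⟨_, (F.toFun z).anchorSeq hS hk⟩

lemma anchor_subset_homeSeq (z : W) : (F.toFun z).anchor ⊆ (homeSeq hS hk F td seed z).1 := by
  unfold homeSeq
  split_ifs with hz
  · exact (anchor_subset_anchors (td.mem_bag_node hz)).trans Set.subset_union_right
  · exact Set.subset_union_right

lemma val_homeSeq {z : W} (hz : z ∈ (M.restrict Q).adom) {v : td.V} (hzv : z ∈ td.bag v) :
    (F.toFun z).val (homeSeq hS hk F td seed z).2 =
      (F.toFun z).val (seqAt hS F.toFun td seed v) := by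
  rw [homeSeq, dif_pos hz]
  exact val_seqAt_eq hS F.toFun td seed hz (td.mem_bag_node hz) hzv

lemma exists_seq_of_rn (hQ : ∀ z ∉ Q, (F.toFun z).anchor ⊆ S) {r : R} {z z' : W}
    (h : M.rn r z z') :
    ∃ (T : Set A) (p : LKSeq D S ℓ k T), (F.toFun z).anchor ⊆ T ∧ (F.toFun z').anchor ⊆ T ∧
      (F.toFun z).val p = (F.toFun z).val (homeSeq hS hk F td seed z).2 ∧
      (F.toFun z').val p = (F.toFun z').val (homeSeq hS hk F td seed z').2 := by
  by_cases hz : z ∈ Q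
  · by_cases hz' : z' ∈ Q
    · have hQr : (M.restrict Q).rn r z z' := ⟨hz, hz', h⟩
      obtain ⟨v, hzv, hz'v⟩ := td.edges r z z' hQr
      exact ⟨_, seqAt hS F.toFun td seed v,
        (anchor_subset_anchors hzv).trans Set.subset_union_right,
        (anchor_subset_anchors hz'v).trans Set.subset_union_right,
        (val_homeSeq hS hk F td seed (Or.inr (Or.inl ⟨r, z', hQr⟩)) hzv).symm,
        (val_homeSeq hS hk F td seed (Or.inr (Or.inr ⟨r, z, hQr⟩)) hz'v).symm⟩
    · exact ⟨_, (homeSeq hS hk F td seed z).2, anchor_subset_homeSeq hS hk F td seed z,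
        (hQ z' hz').trans (homeSeq hS hk F td seed z).2.base_subset, rfl,
        (F.toFun z').val_eq_of_anchor_subset (hQ z' hz') _ _⟩
  · exact ⟨_, (homeSeq hS hk F td seed z').2,
      (hQ z hz).trans (homeSeq hS hk F td seed z').2.base_subset,
      anchor_subset_homeSeq hS hk F td seed z', (F.toFun z).val_eq_of_anchor_subset (hQ z hz) _ _,
      rfl⟩

variable (hQ : ∀ z ∉ Q, (F.toFun z).anchor ⊆ S)

noncomputable def liftHom : Hom M I where
  toFun z := (F.toFun z).val (homeSeq hS hk F td seed z).2
  map_cn c z h := F.map_cn c z h _ _ (anchor_subset_homeSeq hS hk F td seed z)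
  map_rn r z z' h := by
    obtain ⟨T, p, hz, hz', e, e'⟩ := exists_seq_of_rn hS hk F td seed hQ h
    rw [← e, ← e']
    exact F.map_rn r z z' h T p hz hz'

lemma liftHom_apply_of_not_mem {z : W} (hz : z ∉ Q) {T : Set A} (p : LKSeq D S ℓ k T) :
    (liftHom hS hk F td seed hQ).toFun z = (F.toFun z).val p :=
  (F.toFun z).val_eq_of_anchor_subset (hQ z hz) _ _

lemma liftHom_apply_of_mem_root {z : W} (hz : z ∈ (M.restrict Q).adom) (hr : z ∈ td.bag r₀) :
    (liftHom hS hk F td seed hQ).toFun z = (F.toFun z).val seed :=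
  (val_homeSeq hS hk F td seed hz hr).trans (by rw [seqAt_root])

end LiftHom

variable {I : Interp C R Δ}

lemma eval_of_eval_model (hS : S ⊆ D.adom) (hℓ : 1 ≤ ℓ) (hk : 1 ≤ k) {n : ℕ} {φ : CQ C R n}
    (hn : n ≤ 1) (hφ : HasTW φ.canon ℓ k) {e : Elem D S ℓ k Δ}
    (he : φ.Eval (model D S ℓ k I) fun _ => e) {T : Set A} (p : LKSeq D S ℓ k T)
    (hp : e.anchor ⊆ T) : φ.Eval I fun _ => e.val p := by
  obtain ⟨F, hF⟩ := (φ.eval_iff_exists_hom _ _).1 he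
  obtain ⟨td⟩ : HasTW (φ.canon.restrict Set.univ) ℓ k := by rwa [Interp.restrict_univ]
  have hsub : (Set.range (Sum.inl : Fin n → Fin n ⊕ φ.V)).Subsingleton :=
    haveI := Fin.subsingleton_iff_le_one.2 hn
    Set.subsingleton_range _
  obtain ⟨r₀, hr₀⟩ := td.exists_bag_of_subsingleton hsub
  -- the seed continues `p` through the anchor of the answer variables in the root bag
  set X := td.bag r₀ ∩ Set.range Sum.inl
  have hXf : X.Finite := (td.bagFin r₀).inter_of_left _
  have hO : anchors F.toFun X ⊆ T ∩ anchors F.toFun (td.bag r₀) := by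
    refine Set.subset_inter (Set.iUnion₂_subset ?_) (anchors_mono Set.inter_subset_left)
    rintro _ ⟨-, i, rfl⟩
    rwa [hF i]
  have hOℓ : (anchors F.toFun X).ncard ≤ ℓ :=
    (ncard_anchors_le hXf).trans
      (((Set.ncard_le_one hXf).2 fun _ ha _ hb => hsub ha.2 hb.2).trans hℓ)
  let seed := p.stepUnion hO (anchors_finite hXf) hOℓ
    (seqOk_anchors hS (td.bagFin r₀) (td.bagCard r₀))
  let σ := liftHom hS hk F td seed fun z hz => absurd (Set.mem_univ z) hz
  refine (φ.eval_iff_exists_hom _ _).2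
    ⟨σ.ofEqOn (Sum.elim (fun _ => e.val p) (σ.toFun ∘ Sum.inr)) ?_, fun _ => rfl⟩
  rintro (i | y) hi
  · rw [← Interp.restrict_univ φ.canon] at hi
    have hir : Sum.inl i ∈ td.bag r₀ := hr₀ _ ⟨i, rfl⟩ hi
    rw [Sum.elim_inl, liftHom_apply_of_mem_root _ _ _ _ _ _ hi hir, hF i]
    exact e.val_congr fun a ha => (LKSeq.rep_stepUnion_of_mem _ _ _ _ _
      (anchor_subset_anchors (f := F.toFun) (s := X) ⟨hir, i, rfl⟩ (by rwa [hF i]))).symm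
  · rfl

lemma eval_model_of_forall_eval (hS : S ⊆ D.adom) {n : ℕ} {ψ : CQ C R n} (e : Elem D S ℓ k Δ)
    (h : ∀ (T : Set A) (p : LKSeq D S ℓ k T), e.anchor ⊆ T → ψ.Eval I fun _ => e.val p) :
    ψ.Eval (model D S ℓ k I) fun _ => e := by
  simp only [CQ.eval_iff_exists_hom] at h ⊢
  rcases e with ⟨a, φ⟩ | δ
  · -- a quantified variable is sent, at each copy `x` of `a`, to its image under a match in
    -- `I` sending the answer variables to `φ x`
    have hcopy : ∀ x, IsCopyLK x a.1 → ∃ H : Hom ψ.canon I, ∀ i, H.toFun (.inl i) = φ x := by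
      rintro x ⟨T, p, haT, rfl⟩
      exact h T p (Set.singleton_subset_iff.2 haT)
    choose H hH using hcopy
    let τ : Fin n ⊕ ψ.V → Elem D S ℓ k Δ := Sum.elim (fun _ => .inl (a, φ))
      fun y => .inl (a, fun x => if hx : IsCopyLK x a.1 then (H x hx).toFun (.inr y) else φ x)
    refine ⟨homOfVal τ (fun T _ => a.1 ∈ T)
      (fun z T p hz => hz (by rcases z with _ | _ <;> rfl))
      (fun T p hp => H _ ⟨T, p, hp, rfl⟩) ?_, fun _ => rfl⟩
    rintro T p hp (i | y)
    · exact (hH _ _ i).symm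
    · exact dif_pos _
  · obtain ⟨H, hH⟩ := h S (.first S ⟨subset_rfl, hS, by simp, by simp⟩) (Set.empty_subset _)
    refine ⟨homOfVal (Sum.elim (fun _ => .inr δ) fun y => .inr (H.toFun (.inr y)))
      (fun _ _ => True) (fun _ _ _ _ => trivial) (fun _ _ _ => H) ?_, fun _ => rfl⟩
    rintro T p - (i | y)
    · exact (hH i).symm
    · rfl

theorem modelsTGDSet_model [Nonempty Δ] (hS : S ⊆ D.adom) (hℓ : 1 ≤ ℓ) (hk : 1 ≤ k)
    {O : Set (TGD C R)} (hO : ∀ tg ∈ O, tg.n ≤ 1 ∧ HasTW tg.body.canon ℓ k)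
    (hI : ModelsTGDSet I O) : ModelsTGDSet (model D S ℓ k I) O := by
  intro tg htg vv hbody
  obtain ⟨hn, htw⟩ := hO tg htg
  obtain ⟨e, rfl⟩ := exists_eq_const_of_le_one hn vv
  have hhead := fun T (p : LKSeq D S ℓ k T) hp =>
    hI tg htg _ (eval_of_eval_model hS hℓ hk hn htw hbody p hp)
  cases hh : tg.head with
  | none => simpa [hh] using hhead _ (e.anchorSeq hS hk) Set.subset_union_right
  | some ψ => exact eval_model_of_forall_eval hS e fun T p hp => by simpa [hh] using hhead T p hp

theorem certain_unravelLK_of_certain {m : ℕ} {O : Set (TGD C R)} {q : CQ C R m}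
    (hS : S ⊆ D.adom) {t : Fin m → A} (ht : ∀ i, t i ∈ S) (hℓ : 1 ≤ ℓ) (hk : 1 ≤ k)
    (hO : ∀ tg ∈ O, tg.n ≤ 1 ∧ HasTW tg.body.canon ℓ k) (hq : q.HasTWq ℓ k)
    (h : Certain (fun _ I => ModelsTGDSet I O) D (fun _ I v => q.Eval I v) t) :
    Certain (fun _ I => ModelsTGDSet I O) (unravelLK D S ℓ k) (fun _ I v => q.Eval I v)
      (fun i => .inl (t i)) := by
  intro Δ hΔ I hI g
  have := hΔ
  obtain ⟨F, hF⟩ := (q.eval_iff_exists_hom _ _).1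
    (h _ inferInstance _ (modelsTGDSet_model hS hℓ hk hO hI) (homOfUnravel g))
  obtain ⟨td⟩ := hq
  obtain ⟨r₀⟩ := td.conn.nonempty
  have hQ : ∀ z ∉ Set.range Sum.inr, (F.toFun z).anchor ⊆ S := by
    rintro (i | y) hz
    · simp [hF i, homOfUnravel, hS (ht i), Elem.anchor, ht i]
    · exact absurd ⟨y, rfl⟩ hz
  let seed := LKSeq.first (ℓ := ℓ) _
    (seqOk_anchors hS (f := F.toFun) (td.bagFin r₀) (td.bagCard r₀))
  refine (q.eval_iff_exists_hom _ _).2 ⟨liftHom hS hk F td seed hQ, fun i => ?_⟩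
  rw [liftHom_apply_of_not_mem _ _ _ _ _ _ (by simp) seed, hF i]
  simp [homOfUnravel, hS (ht i), Elem.val, seed.rep_of_mem_base (ht i)]

end Guided

theorem stmt7_general {C R A : Type} {m : ℕ} (O : Set (TGD C R))
    (q : CQ C R m)
    (l k : ℕ) (h1 : 1 ≤ l) (h2 : l < k)
    (hO : ∀ tg ∈ O, tg.n ≤ 1 ∧ HasTW tg.body.canon l k)
    (hq : q.HasTWq l k)
    (D : Interp C R A)
    (t : Fin m → A) (ht : ∀ i, t i ∈ D.adom) :
    Certain (fun _ I => ModelsTGDSet I O) D (fun _ I v => q.Eval I v) t ↔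
    Certain (fun _ I => ModelsTGDSet I O) (unravelLK D (Set.range t) l k)
      (fun _ I v => q.Eval I v) (fun i => Sum.inl (t i)) :=
  ⟨Guided.certain_unravelLK_of_certain (Set.range_subset_iff.2 ht) (fun i => ⟨i, rfl⟩) h1
      (h1.trans h2.le) hO hq,
    certain_of_hom (uncopyHom D _ l k) fun _ => rfl⟩

/-- for an OMQ `(O, Σ, q)` with `O` a possibly infinite set of
frontier-one TGDs with bodies of treewidth `(ℓ,k)` and `q` a CQ of treewidth
`(ℓ,k)`, certain answers on a Σ-database `D` coincide with certain answers on
the `(ℓ,k)`-unraveling of `D` up to `t`. -/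
theorem stmt7 {C R A : Type} {m : ℕ} (O : Set (TGD C R))
    (SC : Set C) (SR : Set R) (q : CQ C R m)
    (l k : ℕ) (h1 : 1 ≤ l) (h2 : l < k)
    (hO : ∀ tg ∈ O, tg.n ≤ 1 ∧ HasTW tg.body.canon l k)
    (hq : q.HasTWq l k)
    (D : Interp C R A) (hfin : D.FiniteFacts) (hsig : D.InSig SC SR)
    (t : Fin m → A) (ht : ∀ i, t i ∈ D.adom) :
    Certain (fun _ I => ModelsTGDSet I O) D (fun _ I v => q.Eval I v) t ↔
    Certain (fun _ I => ModelsTGDSet I O) (unravelLK D (Set.range t) l k)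
      (fun _ I v => q.Eval I v) (fun i => Sum.inl (t i)) :=
  stmt7_general O q l k h1 h2 hO hq D t ht
end

section
/- Let O = {⊤ ⊑ A₁ ⊔ A₂} ∪ O' where O' is an ELI ontology and A₁, A₂ are concept names. Let O₁ = {⊤ ⊑ A₁} ∪ O' and O₂ = {⊤ ⊑ A₂} ∪ O'. Then {O₁, O₂} is an exhaustive ELI_⊥-approximation set for O: (i) O₁ ⊨ O and O₂ ⊨ O, and (ii) for every ELI_⊥ ontology O'' with O'' ⊨ O, either O'' ⊨ O₁ or O'' ⊨ O₂. -/
set_option autoImplicit false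

attribute [local instance] Classical.propDecidable

/-! The class of models of an `ELI_⊥` ontology is closed under direct products, since the
extension of an `ELI` concept in `I × J` is the product of its extensions in `I` and `J`.
If `O''` entailed `⊤ ⊑ A₁ ⊔ A₂` but neither `⊤ ⊑ A₁` nor `⊤ ⊑ A₂`, countermodels `I₁ ∌ A₁(a)`
and `I₂ ∌ A₂(b)` would give a model `I₁ × I₂` of `O''` in which `(a, b)` lies in neither. -/

namespace Interp

variable {C R Δ₁ Δ₂ : Type}

def prod (I : Interp C R Δ₁) (J : Interp C R Δ₂) : Interp C R (Δ₁ × Δ₂) where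
  cn c p := I.cn c p.1 ∧ J.cn c p.2
  rn r p q := I.rn r p.1 q.1 ∧ J.rn r p.2 q.2

theorem roleE_prod (I : Interp C R Δ₁) (J : Interp C R Δ₂) (ρ : R ⊕ R) (p q : Δ₁ × Δ₂) :
    (I.prod J).roleE ρ p q ↔ I.roleE ρ p.1 q.1 ∧ J.roleE ρ p.2 q.2 := by
  cases ρ <;> rfl

end Interp

theorem ELIU.sem_prod {C R Δ₁ Δ₂ : Type} (I : Interp C R Δ₁) (J : Interp C R Δ₂)
    {X : ELIU C R} (hd : X.disjFree) (hu : X.uFree) (p : Δ₁ × Δ₂) :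
    X.sem (I.prod J) p ↔ X.sem I p.1 ∧ X.sem J p.2 := by
  induction X generalizing p with
  | top => exact and_self_iff.symm
  | bot => exact and_self_iff.symm
  | cn c => rfl
  | inter X Y ihX ihY =>
    simp only [sem, ihX hd.1 hu.1, ihY hd.2 hu.2]
    tauto
  | union => exact hd.elim
  | exR ρ X ih =>
    simp only [sem, Interp.roleE_prod, ih hd hu, Prod.exists]
    constructor
    · rintro ⟨b₁, b₂, ⟨hr₁, hr₂⟩, hb₁, hb₂⟩
      exact ⟨⟨b₁, hr₁, hb₁⟩, ⟨b₂, hr₂, hb₂⟩⟩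
    · rintro ⟨⟨b₁, hr₁, hb₁⟩, ⟨b₂, hr₂, hb₂⟩⟩
      exact ⟨b₁, b₂, ⟨hr₁, hr₂⟩, hb₁, hb₂⟩
  | exU => exact hu.elim

section Entailment

variable {C R : Type}

theorem modelsELIUOnt_insert {A : Type} {I : Interp C R A} {p : ELIU C R × ELIU C R}
    {O : Set (ELIU C R × ELIU C R)} :
    ModelsELIUOnt I (insert p O) ↔ (∀ a, p.1.sem I a → p.2.sem I a) ∧ ModelsELIUOnt I O :=
  Set.forall_mem_insert

theorem ModelsELIUOnt.prod {Δ₁ Δ₂ : Type} {I : Interp C R Δ₁} {J : Interp C R Δ₂}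
    {O : Set (ELIU C R × ELIU C R)} (hO : ∀ p ∈ O, ELIbotCI p)
    (hI : ModelsELIUOnt I O) (hJ : ModelsELIUOnt J O) : ModelsELIUOnt (I.prod J) O := by
  intro p hp x hx
  obtain ⟨hd₁, hu₁, hd₂, hu₂⟩ := hO p hp
  rw [ELIU.sem_prod I J hd₁ hu₁] at hx
  rw [ELIU.sem_prod I J hd₂ hu₂]
  exact ⟨hI p hp x.1 hx.1, hJ p hp x.2 hx.2⟩

theorem entailsELIU_insert_of_sem_imp {D X Y : ELIU C R} {O : Set (ELIU C R × ELIU C R)}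
    (hXY : ∀ (A : Type) (I : Interp C R A) (a : A), X.sem I a → Y.sem I a) :
    EntailsELIU (insert (D, X) O) (insert (D, Y) O) := by
  intro Δ _ I hI
  obtain ⟨hDX, hO⟩ := modelsELIUOnt_insert.1 hI
  exact modelsELIUOnt_insert.2 ⟨fun a ha => hXY Δ I a (hDX a ha), hO⟩

theorem exists_countermodel_top {O O' : Set (ELIU C R × ELIU C R)} {X : ELIU C R}
    (hO' : EntailsELIU O O') (hX : ¬ EntailsELIU O (insert (.top, X) O')) :
    ∃ (Δ : Type) (I : Interp C R Δ), ModelsELIUOnt I O ∧ ∃ a, ¬ X.sem I a := by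
  contrapose! hX
  intro Δ hΔ I hI
  exact modelsELIUOnt_insert.2 ⟨fun a _ => hX Δ I hI a, hO' Δ hΔ I hI⟩

theorem EntailsELIU.top_union_cases {O O' : Set (ELIU C R × ELIU C R)} {X Y : ELIU C R}
    (hO : ∀ p ∈ O, ELIbotCI p) (hXd : X.disjFree) (hXu : X.uFree) (hYd : Y.disjFree)
    (hYu : Y.uFree) (h : EntailsELIU O (insert (.top, .union X Y) O')) :
    EntailsELIU O (insert (.top, X) O') ∨ EntailsELIU O (insert (.top, Y) O') := by
  have hO' : EntailsELIU O O' := fun Δ hΔ I hI => (modelsELIUOnt_insert.1 (h Δ hΔ I hI)).2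
  by_contra! hcon
  obtain ⟨Δ₁, I₁, hI₁, a, ha⟩ := exists_countermodel_top hO' hcon.1
  obtain ⟨Δ₂, I₂, hI₂, b, hb⟩ := exists_countermodel_top hO' hcon.2
  have hXY := (modelsELIUOnt_insert.1 (h _ ⟨(a, b)⟩ _ (hI₁.prod hO hI₂))).1 (a, b) trivial
  rcases hXY with hX | hY
  · exact ha ((ELIU.sem_prod I₁ I₂ hXd hXu (a, b)).1 hX).1
  · exact hb ((ELIU.sem_prod I₁ I₂ hYd hYu (a, b)).1 hY).2

end Entailment

theorem stmt11_general {C R : Type} (A1 A2 : C) (O' : Set (ELIU C R × ELIU C R)) :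
    (EntailsELIU (insert (ELIU.top, ELIU.cn A1) O')
        (insert (ELIU.top, ELIU.union (ELIU.cn A1) (ELIU.cn A2)) O') ∧
     EntailsELIU (insert (ELIU.top, ELIU.cn A2) O')
        (insert (ELIU.top, ELIU.union (ELIU.cn A1) (ELIU.cn A2)) O')) ∧
    (∀ O'' : Set (ELIU C R × ELIU C R), (∀ p ∈ O'', ELIbotCI p) → O''.Finite →
      EntailsELIU O''
        (insert (ELIU.top, ELIU.union (ELIU.cn A1) (ELIU.cn A2)) O') →
      (EntailsELIU O'' (insert (ELIU.top, ELIU.cn A1) O') ∨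
       EntailsELIU O'' (insert (ELIU.top, ELIU.cn A2) O'))) :=
  ⟨⟨entailsELIU_insert_of_sem_imp fun _ _ _ => Or.inl,
      entailsELIU_insert_of_sem_imp fun _ _ _ => Or.inr⟩,
    fun _ hO'' _ h => EntailsELIU.top_union_cases hO'' trivial trivial trivial trivial h⟩

/-- for `O = {⊤ ⊑ A₁ ⊔ A₂} ∪ O'` with `O'` an ELI ontology,
`{O₁, O₂}` with `Oᵢ = {⊤ ⊑ Aᵢ} ∪ O'` is an exhaustive `ELI_⊥`-approximation
set for `O`: (i) `O₁ ⊨ O` and `O₂ ⊨ O`, and (ii) every `ELI_⊥` ontology `O''`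
with `O'' ⊨ O` satisfies `O'' ⊨ O₁` or `O'' ⊨ O₂`. -/
theorem stmt11 {C R : Type} (A1 A2 : C) (O' : Set (ELIU C R × ELIU C R))
    (hO' : ∀ p ∈ O', ELICI p) (hfin : O'.Finite) :
    (EntailsELIU (insert (ELIU.top, ELIU.cn A1) O')
        (insert (ELIU.top, ELIU.union (ELIU.cn A1) (ELIU.cn A2)) O') ∧
     EntailsELIU (insert (ELIU.top, ELIU.cn A2) O')
        (insert (ELIU.top, ELIU.union (ELIU.cn A1) (ELIU.cn A2)) O')) ∧
    (∀ O'' : Set (ELIU C R × ELIU C R), (∀ p ∈ O'', ELIbotCI p) → O''.Finite →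
      EntailsELIU O''
        (insert (ELIU.top, ELIU.union (ELIU.cn A1) (ELIU.cn A2)) O') →
      (EntailsELIU O'' (insert (ELIU.top, ELIU.cn A1) O') ∨
       EntailsELIU O'' (insert (ELIU.top, ELIU.cn A2) O'))) :=
  stmt11_general A1 A2 O'
end
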